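/- arXiv:1710.07077 — 3 statements merged into one kernel-verified Lean document; each statement's English description precedes it below -/
import Mathlib

section
/- Let w ∈ H²_per(P) solve −|∇ + ik|² w = ψ w on P = (0,2π]^d with periodic boundary conditions where k ∈ B, and suppose ψ ∈ H^{a}_per(P) for some a > d + τ with τ ≥ 0 given. If the Fourier coefficient sequence of w lies in l²_τ(Z^d), then it lies in l²_{τ+2}(Z^d); equivalently, w ∈ H^{τ+2}_per(P). -/
open MeasureTheory Complex Real RealInnerProductSpace

noncomputable section

abbrev Rd (d : ℕ) := EuclideanSpace ℝ (Fin d)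

def zEmbed {d : ℕ} (m : Fin d → ℤ) : Rd d := WithLp.toLp 2 (fun j => (m j : ℝ))

def Bz (d : ℕ) : Set (Rd d) := {k | ∀ j, k j ∈ Set.Ioc (-(1/2) : ℝ) (1/2)}

def Pcell (d : ℕ) : Set (Rd d) := {x | ∀ j, x j ∈ Set.Ioc (0 : ℝ) (2 * π)}

/-- Fourier transform with the paper's normalization. -/
def fhat {d : ℕ} (f : Rd d → ℂ) (k : Rd d) : ℂ :=
  ((2 * π : ℝ) ^ (-(d : ℤ)) : ℝ) • ∫ x, f x * Complex.exp (-Complex.I * ((inner ℝ k x : ℝ) : ℂ))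

/-- Bloch transform. -/
def bloch {d : ℕ} (f : Rd d → ℂ) (x k : Rd d) : ℂ :=
  ∑' m : Fin d → ℤ, fhat f (k + zEmbed m) * Complex.exp (Complex.I * ((inner ℝ (zEmbed m) x : ℝ) : ℂ))

/-- Membership in H^s(ℝ^d) via the Fourier characterization. -/
def MemHs {d : ℕ} (s : ℝ) (f : Rd d → ℂ) : Prop :=
  Integrable (fun k : Rd d => (1 + ‖k‖ ^ 2) ^ s * ‖fhat f k‖ ^ 2)

/-- Fourier coefficients of a 2π-periodic function. -/
def fcoef {d : ℕ} (g : Rd d → ℂ) (n : Fin d → ℤ) : ℂ :=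
  ((2 * π : ℝ) ^ (-(d : ℤ)) : ℝ) •
    ∫ x in Pcell d, g x * Complex.exp (-Complex.I * ((inner ℝ (zEmbed n) x : ℝ) : ℂ))

/-- The H^s_per(P) norm via Fourier coefficients. -/
def hsPerNorm {d : ℕ} (s : ℝ) (g : Rd d → ℂ) : ℝ :=
  (∑' n : Fin d → ℤ, (1 + ‖zEmbed n‖ ^ (2 * s)) * ‖fcoef g n‖ ^ 2) ^ (1/2 : ℝ)

def MemHsPer {d : ℕ} (s : ℝ) (g : Rd d → ℂ) : Prop :=
  Summable (fun n : Fin d → ℤ => (1 + ‖zEmbed n‖ ^ (2 * s)) * ‖fcoef g n‖ ^ 2)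

/-- The L¹(B,H^s_per(P)) norm; `u x k` is the value of ũ(x,k). -/
def l1HsNorm {d : ℕ} (s : ℝ) (u : Rd d → Rd d → ℂ) : ℝ :=
  ∫ k in Bz d, hsPerNorm s (fun x => u x k)

/-- 2π-periodicity in the x variable. -/
def XPer {d : ℕ} (u : Rd d → Rd d → ℂ) : Prop :=
  ∀ x k j, u (x + (2 * π) • (EuclideanSpace.single j (1:ℝ))) k = u x k

/-- Quasi-periodicity in the k variable. -/
def KQPer {d : ℕ} (u : Rd d → Rd d → ℂ) : Prop :=
  ∀ x k j, u x (k + EuclideanSpace.single j (1:ℝ)) =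
    Complex.exp (-Complex.I * (x j : ℂ)) * u x k

/-- Convolution over the Brillouin zone. -/
def convB {d : ℕ} (u v : Rd d → Rd d → ℂ) (x k : Rd d) : ℂ :=
  ∫ l in Bz d, u x (k - l) * v x l

/-- Convolution over ℝ^d. -/
def convR {d : ℕ} (f g : Rd d → ℂ) (κ : Rd d) : ℂ := ∫ l, f (κ - l) * g l

/-- Partial derivative. -/
def pderiv {d : ℕ} (j : Fin d) (u : Rd d → ℂ) (x : Rd d) : ℂ :=
  fderiv ℝ u x (EuclideanSpace.single j (1:ℝ))

def lapl {d : ℕ} (u : Rd d → ℂ) (x : Rd d) : ℂ := ∑ j, pderiv j (pderiv j u) x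

/-- The Bloch operator L(k) = -χ₁|∇+ik|² + χ₂. -/
def LkOp {d : ℕ} (χ1 χ2 : Rd d → ℝ) (k : Rd d) (u : Rd d → ℂ) (x : Rd d) : ℂ :=
  -(χ1 x : ℂ) * (lapl u x + 2 * Complex.I * (∑ j, (k j : ℂ) * pderiv j u x)
    - ((‖k‖ ^ 2 : ℝ) : ℂ) * u x) + (χ2 x : ℂ) * u x

/-- Periodicity of a complex function. -/
def PerC {d : ℕ} (u : Rd d → ℂ) : Prop :=
  ∀ x j, u (x + (2 * π) • (EuclideanSpace.single j (1:ℝ))) = u x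

def PerR {d : ℕ} (u : Rd d → ℝ) : Prop :=
  ∀ x j, u (x + (2 * π) • (EuclideanSpace.single j (1:ℝ))) = u x

/-- L²(P) norm. -/
def L2PNorm {d : ℕ} (f : Rd d → ℂ) : ℝ := (∫ x in Pcell d, ‖f x‖ ^ 2) ^ (1/2 : ℝ)

/-- Weighted l²_{s/d} norm on sequences indexed by ℕ (n ↦ n+1). -/
def l2sdNorm (d : ℕ) (s : ℝ) (v : ℕ → ℂ) : ℝ :=
  (∑' n : ℕ, ((n : ℝ) + 1) ^ (2 * s / d) * ‖v n‖ ^ 2) ^ (1/2 : ℝ)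

end

/-!
Write `P_n = ∑ⱼ Ψ_{n-j} W_j`. The equation says `|k + n|² W_n = P_n`, and
`1 + |n|² ≤ 2 (1 + |k|²) (1 + |k + n|²)`, so two powers of the weight are gained:
`(1 + |n|^{2τ+4}) |W_n|² ≲ (1 + |n|^{2τ}) (|W_n|² + |P_n|²)`. It remains to see `P ∈ l²_τ`.
By Cauchy–Schwarz with weights, `(1 + |n|^{2τ}) |P_n|²` is at most
`∑ⱼ (1 + |n-j|^{2a}) |Ψ_{n-j}|² (1 + |j|^{2τ}) |W_j|²`, which is summable in `n`, times
`∑ⱼ (1 + |n|^{2τ}) / ((1 + |n-j|^{2a}) (1 + |j|^{2τ}))`. Peetre's inequality bounds the latter,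
uniformly in `n`, by a multiple of the lattice sum `∑ₘ (1 + |m|^{2(a-τ)})⁻¹`, which converges
because `2(a - τ) > d`.
-/

lemma zEmbed_add {d : ℕ} (m j : Fin d → ℤ) : zEmbed (m + j) = zEmbed m + zEmbed j := by
  ext i; simp [zEmbed]

lemma zEmbed_injective {d : ℕ} : Function.Injective (zEmbed (d := d)) := by
  intro m j h
  funext i
  simpa [zEmbed] using congrArg (· i) h

lemma zEmbed_mem_span_basisFun {d : ℕ} (m : Fin d → ℤ) :
    zEmbed m ∈ Submodule.span ℤ (Set.range (EuclideanSpace.basisFun (Fin d) ℝ).toBasis) := by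
  have : zEmbed m = ∑ i, m i • (EuclideanSpace.basisFun (Fin d) ℝ).toBasis i := by
    ext i; simp [zEmbed, Pi.single_apply]
  rw [this]
  exact Submodule.sum_mem _ fun i _ => Submodule.smul_mem _ _ (Submodule.subset_span ⟨i, rfl⟩)

lemma summable_norm_zEmbed_rpow {d : ℕ} {r : ℝ} (hr : r < -d) :
    Summable fun m : Fin d → ℤ => ‖zEmbed m‖ ^ r := by
  let L := Submodule.span ℤ (Set.range (EuclideanSpace.basisFun (Fin d) ℝ).toBasis)
  have hrank : Module.finrank ℤ L = d := by rw [ZLattice.rank ℝ L]; simp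
  have hL : Summable fun z : L => ‖z‖ ^ r :=
    ZLattice.summable_norm_rpow L r (by rw [hrank]; exact hr)
  have hi : Function.Injective fun m => (⟨zEmbed m, zEmbed_mem_span_basisFun m⟩ : L) :=
    fun m j h => zEmbed_injective (congrArg Subtype.val h)
  have := hL.comp_injective hi
  simp only [Function.comp_def] at this
  exact this

lemma summable_inv_one_add_norm_zEmbed_rpow {d : ℕ} {s : ℝ} (hs : d < s) :
    Summable fun m : Fin d → ℤ => (1 + ‖zEmbed m‖ ^ s)⁻¹ := by
  refine (summable_norm_zEmbed_rpow (r := -s) (by linarith)).of_norm_bounded_eventually ?_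
  filter_upwards [(Set.finite_singleton 0).compl_mem_cofinite] with m hm
  have hpos : 0 < ‖zEmbed m‖ := by
    rw [norm_pos_iff]
    exact fun h => hm (zEmbed_injective (h.trans (by ext i; simp [zEmbed])))
  rw [Real.norm_of_nonneg (by positivity), Real.rpow_neg hpos.le]
  gcongr
  linarith

lemma Real.add_rpow_le_two_rpow_mul_rpow_add_rpow {x y p : ℝ} (hx : 0 ≤ x) (hy : 0 ≤ y)
    (hp : 0 ≤ p) : (x + y) ^ p ≤ 2 ^ p * (x ^ p + y ^ p) := calc
  (x + y) ^ p ≤ (2 * max x y) ^ p := by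
    gcongr
    rw [two_mul]; gcongr <;> simp
  _ = 2 ^ p * max x y ^ p := Real.mul_rpow zero_le_two (le_max_of_le_left hx)
  _ ≤ 2 ^ p * (x ^ p + y ^ p) := by
    gcongr
    rcases le_total x y with h | h
    · rw [max_eq_right h]; linarith [Real.rpow_nonneg hx p]
    · rw [max_eq_left h]; linarith [Real.rpow_nonneg hy p]

lemma one_add_add_rpow_le {x y p : ℝ} (hx : 0 ≤ x) (hy : 0 ≤ y) (hp : 0 ≤ p) :
    1 + (x + y) ^ p ≤ 2 ^ p * ((1 + x ^ p) * (1 + y ^ p)) := by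
  have h := Real.add_rpow_le_two_rpow_mul_rpow_add_rpow hx hy hp
  have h2 : 1 ≤ (2 : ℝ) ^ p := Real.one_le_rpow one_le_two hp
  nlinarith [Real.rpow_nonneg hx p, Real.rpow_nonneg hy p,
    mul_nonneg (Real.rpow_nonneg hx p) (Real.rpow_nonneg hy p)]

lemma Real.rpow_mul_rpow_le_rpow_add {x p q : ℝ} (hx : 0 ≤ x) (hp : 0 ≤ p) (hq : 0 ≤ q) :
    x ^ p * x ^ q ≤ x ^ (p + q) := by
  rcases eq_or_ne (p + q) 0 with h | h
  · obtain rfl : p = 0 := by linarith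
    obtain rfl : q = 0 := by linarith
    simp
  · exact (Real.rpow_add' hx h).ge

lemma one_add_rpow_mul_one_add_rpow_le {x p q : ℝ} (hx : 0 ≤ x) (hp : 0 ≤ p) (hq : 0 ≤ q) :
    (1 + x ^ p) * (1 + x ^ q) ≤ 2 * (1 + x ^ (p + q)) := by
  have hmul := Real.rpow_mul_rpow_le_rpow_add hx hp hq
  have hsign : 0 ≤ (x ^ p - 1) * (x ^ q - 1) := by
    rcases le_total x 1 with h | h
    · exact mul_nonneg_of_nonpos_of_nonpos (by linarith [Real.rpow_le_one hx h hp])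
        (by linarith [Real.rpow_le_one hx h hq])
    · exact mul_nonneg (by linarith [Real.one_le_rpow h hp]) (by linarith [Real.one_le_rpow h hq])
  nlinarith

lemma one_add_norm_add_rpow_le {E : Type*} [SeminormedAddCommGroup E] {s r : ℝ} (hs : 0 ≤ s)
    (hsr : s ≤ r) (x y : E) :
    1 + ‖x + y‖ ^ s ≤
      2 ^ s * 2 / (1 + ‖x‖ ^ (r - s)) * ((1 + ‖x‖ ^ r) * (1 + ‖y‖ ^ s)) := by
  rw [div_mul_eq_mul_div, le_div_iff₀ (by positivity)]
  calc (1 + ‖x + y‖ ^ s) * (1 + ‖x‖ ^ (r - s))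
      ≤ 2 ^ s * ((1 + ‖x‖ ^ s) * (1 + ‖y‖ ^ s)) * (1 + ‖x‖ ^ (r - s)) := by
        gcongr
        calc 1 + ‖x + y‖ ^ s ≤ 1 + (‖x‖ + ‖y‖) ^ s := by gcongr; exact norm_add_le x y
          _ ≤ _ := one_add_add_rpow_le (norm_nonneg x) (norm_nonneg y) hs
    _ = 2 ^ s * (1 + ‖y‖ ^ s) * ((1 + ‖x‖ ^ s) * (1 + ‖x‖ ^ (r - s))) := by ring
    _ ≤ 2 ^ s * (1 + ‖y‖ ^ s) * (2 * (1 + ‖x‖ ^ (s + (r - s)))) := by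
        have := one_add_rpow_mul_one_add_rpow_le (norm_nonneg x) hs (sub_nonneg.mpr hsr)
        exact mul_le_mul_of_nonneg_left this (by positivity)
    _ = 2 ^ s * 2 * ((1 + ‖x‖ ^ r) * (1 + ‖y‖ ^ s)) := by rw [add_sub_cancel]; ring

lemma one_add_rpow_add_four_le {ρ s : ℝ} (hρ : 0 ≤ ρ) (hs : 0 ≤ s) :
    1 + ρ ^ (s + 4) ≤ (1 + ρ ^ s) * (1 + ρ ^ 2) ^ 2 := by
  rw [Real.rpow_add' hρ (by linarith), show (4 : ℝ) = (4 : ℕ) by norm_num, Real.rpow_natCast]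
  nlinarith [Real.rpow_nonneg hρ s, sq_nonneg ρ, pow_nonneg (sq_nonneg ρ) 2,
    mul_nonneg (Real.rpow_nonneg hρ s) (sq_nonneg ρ)]

lemma one_add_norm_sq_mul_le {E : Type*} [SeminormedAddCommGroup E] (k x : E) {V P : ℝ}
    (hV : 0 ≤ V) (h : ‖k + x‖ ^ 2 * V ≤ P) :
    (1 + ‖x‖ ^ 2) * V ≤ 2 * (1 + ‖k‖ ^ 2) * (V + P) := by
  have hx : ‖x‖ ≤ ‖k + x‖ + ‖k‖ := by
    simpa using norm_sub_le (k + x) k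
  have hx2 : ‖x‖ ^ 2 ≤ 2 * ‖k + x‖ ^ 2 + 2 * ‖k‖ ^ 2 := by
    nlinarith [norm_nonneg x, sq_nonneg (‖k + x‖ - ‖k‖)]
  have hP : 0 ≤ P := h.trans' (by positivity)
  nlinarith [mul_nonneg (sq_nonneg ‖k‖) hV, mul_nonneg (sq_nonneg ‖k‖) (sq_nonneg ‖k + x‖),
    mul_le_mul_of_nonneg_right hx2 hV, mul_nonneg (sq_nonneg ‖k‖) hP]

lemma one_add_norm_rpow_mul_sq_le_of_norm_add_sq_mul_eq {E : Type*} [SeminormedAddCommGroup E]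
    {τ V P : ℝ} (hτ : 0 ≤ τ) (k x : E) (hV : 0 ≤ V) (h : ‖k + x‖ ^ 2 * V = P) :
    (1 + ‖x‖ ^ (2 * (τ + 2))) * V ^ 2 ≤
      8 * (1 + ‖k‖ ^ 2) ^ 2 * ((1 + ‖x‖ ^ (2 * τ)) * V ^ 2 + (1 + ‖x‖ ^ (2 * τ)) * P ^ 2) := by
  have hlow := one_add_norm_sq_mul_le k x hV h.le
  have hsq : ((1 + ‖x‖ ^ 2) * V) ^ 2 ≤ 8 * (1 + ‖k‖ ^ 2) ^ 2 * (V ^ 2 + P ^ 2) := by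
    nlinarith [pow_le_pow_left₀ (by positivity) hlow 2, sq_nonneg (V - P)]
  calc (1 + ‖x‖ ^ (2 * (τ + 2))) * V ^ 2
      ≤ (1 + ‖x‖ ^ (2 * τ)) * (1 + ‖x‖ ^ 2) ^ 2 * V ^ 2 := by
        rw [show 2 * (τ + 2) = 2 * τ + 4 by ring]
        gcongr
        exact one_add_rpow_add_four_le (norm_nonneg x) (by linarith)
    _ = (1 + ‖x‖ ^ (2 * τ)) * ((1 + ‖x‖ ^ 2) * V) ^ 2 := by ring
    _ ≤ (1 + ‖x‖ ^ (2 * τ)) * (8 * (1 + ‖k‖ ^ 2) ^ 2 * (V ^ 2 + P ^ 2)) := by gcongr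
    _ = _ := by ring

lemma summable_and_sq_tsum_le_tsum_mul_sq_mul_tsum_inv {ι : Type*} {x ω : ι → ℝ}
    (hx : ∀ i, 0 ≤ x i) (hω : ∀ i, 0 < ω i) (hωx : Summable fun i => ω i * x i ^ 2)
    (hω' : Summable fun i => (ω i)⁻¹) :
    Summable x ∧ (∑' i, x i) ^ 2 ≤ (∑' i, ω i * x i ^ 2) * ∑' i, (ω i)⁻¹ := by
  set B := (∑' i, ω i * x i ^ 2) * ∑' i, (ω i)⁻¹
  have hfin : ∀ s : Finset ι, ∑ i ∈ s, x i ≤ √B := fun s => by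
    refine Real.le_sqrt_of_sq_le ?_
    calc (∑ i ∈ s, x i) ^ 2 ≤ (∑ i ∈ s, ω i * x i ^ 2) * ∑ i ∈ s, (ω i)⁻¹ :=
          Finset.sum_sq_le_sum_mul_sum_of_sq_le_mul s (fun i _ => by positivity [hω i])
            (fun i _ => (inv_pos.mpr (hω i)).le)
            (fun i _ => by rw [mul_right_comm, mul_inv_cancel₀ (hω i).ne', one_mul])
      _ ≤ B := mul_le_mul (hωx.sum_le_tsum s fun i _ => by positivity [hω i])
          (hω'.sum_le_tsum s fun i _ => (inv_pos.mpr (hω i)).le)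
          (Finset.sum_nonneg fun i _ => (inv_pos.mpr (hω i)).le)
          (tsum_nonneg fun i => by positivity [hω i])
  have hsum : Summable x := summable_of_sum_le hx hfin
  refine ⟨hsum, ?_⟩
  have hB : 0 ≤ B := mul_nonneg (tsum_nonneg fun i => by positivity [hω i])
    (tsum_nonneg fun i => (inv_pos.mpr (hω i)).le)
  calc (∑' i, x i) ^ 2 ≤ √B ^ 2 := by
        gcongr
        · exact tsum_nonneg hx
        · exact hsum.tsum_le_of_sum_le hfin
    _ = B := Real.sq_sqrt hB

theorem summable_mul_norm_tsum_mul_sub_sq {G R : Type*} [AddCommGroup G] [NormedRing R]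
    {α β γ κ : G → ℝ} {u v : G → R} (hα : ∀ m, 0 < α m) (hβ : ∀ m, 0 < β m)
    (hγ : ∀ m, 0 < γ m) (hu : Summable fun m => α m * ‖u m‖ ^ 2)
    (hv : Summable fun m => β m * ‖v m‖ ^ 2) (hκ : Summable κ)
    (hker : ∀ m j, γ (m + j) ≤ κ m * (α m * β j)) :
    Summable fun n => γ n * ‖∑' j, u (n - j) * v j‖ ^ 2 := by
  set A := fun m => α m * ‖u m‖ ^ 2
  set B := fun m => β m * ‖v m‖ ^ 2
  have hA : ∀ m, 0 ≤ A m := fun m => by positivity [hα m]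
  have hB : ∀ m, 0 ≤ B m := fun m => by positivity [hβ m]
  have hAB : Summable fun p : G × G => A (p.1 - p.2) * B p.2 := by
    have hi : Function.Injective fun p : G × G => (p.1 - p.2, p.2) := fun p q h => by
      simp only [Prod.mk.injEq] at h
      ext
      · simpa [h.2] using h.1
      · exact h.2
    have := (hu.mul_of_nonneg hv hA hB).comp_injective hi
    simp only [Function.comp_def] at this
    exact this
  obtain ⟨hfiber, hS⟩ := (summable_prod_of_nonneg fun p => mul_nonneg (hA _) (hB _)).mp hAB
  have hpt : ∀ n, γ n * ‖∑' j, u (n - j) * v j‖ ^ 2 ≤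
      (∑' m, κ m) * ∑' j, A (n - j) * B j := by
    intro n
    have hω : ∀ j, γ n * (α (n - j) * β j)⁻¹ ≤ κ (n - j) := fun j => by
      rw [mul_inv_le_iff₀ (mul_pos (hα _) (hβ _))]
      simpa using hker (n - j) j
    have hκn : Summable fun j => κ (n - j) := (Equiv.subLeft n).summable_iff.mpr hκ
    have hinv : Summable fun j => (α (n - j) * β j)⁻¹ := by
      refine (hκn.div_const (γ n)).of_nonneg_of_le
        (fun j => (inv_pos.mpr (mul_pos (hα _) (hβ _))).le) fun j => ?_
      rw [le_div_iff₀ (hγ n), mul_comm]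
      exact hω j
    have hAB_eq : ∀ j, α (n - j) * β j * (‖u (n - j)‖ * ‖v j‖) ^ 2 = A (n - j) * B j :=
      fun j => by simp only [A, B]; ring
    obtain ⟨hx, hCS⟩ := summable_and_sq_tsum_le_tsum_mul_sq_mul_tsum_inv
      (x := fun j => ‖u (n - j)‖ * ‖v j‖) (ω := fun j => α (n - j) * β j)
      (fun j => by positivity) (fun j => mul_pos (hα (n - j)) (hβ j))
      ((hfiber n).congr fun j => (hAB_eq j).symm) hinv
    simp only [hAB_eq] at hCS
    have hnorm : ‖∑' j, u (n - j) * v j‖ ≤ ∑' j, ‖u (n - j)‖ * ‖v j‖ :=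
      tsum_of_norm_bounded hx.hasSum fun j => norm_mul_le _ _
    have hγT : γ n * ∑' j, (α (n - j) * β j)⁻¹ ≤ ∑' m, κ m := by
      rw [← tsum_mul_left, ← (Equiv.subLeft n).tsum_eq κ]
      exact (hinv.mul_left _).tsum_le_tsum hω hκn
    calc γ n * ‖∑' j, u (n - j) * v j‖ ^ 2
        ≤ γ n * ((∑' j, A (n - j) * B j) * ∑' j, (α (n - j) * β j)⁻¹) := by
          gcongr γ n * ?_
          · exact (hγ n).le
          · exact (pow_le_pow_left₀ (norm_nonneg _) hnorm 2).trans hCS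
      _ = (γ n * ∑' j, (α (n - j) * β j)⁻¹) * ∑' j, A (n - j) * B j := by ring
      _ ≤ (∑' m, κ m) * ∑' j, A (n - j) * B j :=
          mul_le_mul_of_nonneg_right hγT (tsum_nonneg fun j => mul_nonneg (hA _) (hB _))
  exact (hS.mul_left _).of_nonneg_of_le (fun n => by positivity [hγ n]) hpt

theorem elliptic_bootstrap_general (d : ℕ) (τ a : ℝ) (hτ : 0 ≤ τ) (ha : a > d + τ)
    (k : Rd d) (w ψ : Rd d → ℂ)
    (hψa : MemHsPer a ψ)
    -- the Fourier-coefficient form of −|∇+ik|²w = ψw :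
    (heq : ∀ n : Fin d → ℤ,
      (((‖zEmbed n‖ ^ 2 + 2 * (inner ℝ k (zEmbed n) : ℝ) + ‖k‖ ^ 2 : ℝ)) : ℂ) * fcoef w n =
        ∑' j : Fin d → ℤ, fcoef ψ (n - j) * fcoef w j)
    (hWτ : MemHsPer τ w) :
    MemHsPer (τ + 2) w := by
  have hkernel : Summable fun m : Fin d → ℤ =>
      2 ^ (2 * τ) * 2 / (1 + ‖zEmbed m‖ ^ (2 * a - 2 * τ)) := by
    simpa only [div_eq_mul_inv] using
      (summable_inv_one_add_norm_zEmbed_rpow (s := 2 * a - 2 * τ) (by linarith)).mul_left _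
  have hconv : Summable fun n => (1 + ‖zEmbed n‖ ^ (2 * τ)) *
      ‖∑' j, fcoef ψ (n - j) * fcoef w j‖ ^ 2 :=
    summable_mul_norm_tsum_mul_sub_sq (fun _ => by positivity) (fun _ => by positivity)
      (fun _ => by positivity) hψa hWτ hkernel fun m j => by
        simpa only [zEmbed_add] using
          one_add_norm_add_rpow_le (r := 2 * a) (by linarith) (by linarith) (zEmbed m) (zEmbed j)
  have hsymbol : ∀ n,
      ‖k + zEmbed n‖ ^ 2 * ‖fcoef w n‖ = ‖∑' j, fcoef ψ (n - j) * fcoef w j‖ := by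
    intro n
    have hexpand :
        ‖zEmbed n‖ ^ 2 + 2 * inner ℝ k (zEmbed n) + ‖k‖ ^ 2 = ‖k + zEmbed n‖ ^ 2 := by
      rw [norm_add_sq_real]; ring
    rw [← heq n, hexpand, norm_mul, Complex.norm_real, Real.norm_of_nonneg (by positivity)]
  refine ((hWτ.add hconv).mul_left (8 * (1 + ‖k‖ ^ 2) ^ 2)).of_nonneg_of_le
    (fun n => by positivity) fun n => ?_
  exact one_add_norm_rpow_mul_sq_le_of_norm_add_sq_mul_eq hτ k (zEmbed n) (norm_nonneg _)
    (hsymbol n)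

/-- elliptic regularity bootstrap for a periodic solution of
−|∇+ik|²w = ψw, at the level of Fourier coefficients. -/
theorem elliptic_bootstrap (d : ℕ) (τ a : ℝ) (hτ : 0 ≤ τ) (ha : a > d + τ)
    (k : Rd d) (hk : k ∈ Bz d) (w ψ : Rd d → ℂ)
    (hw : PerC w) (hψ : PerC ψ)
    (hw2 : MemHsPer 2 w)
    (hψa : MemHsPer a ψ)
    -- the Fourier-coefficient form of −|∇+ik|²w = ψw :
    (heq : ∀ n : Fin d → ℤ,
      (((‖zEmbed n‖ ^ 2 + 2 * (inner ℝ k (zEmbed n) : ℝ) + ‖k‖ ^ 2 : ℝ)) : ℂ) * fcoef w n =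
        ∑' j : Fin d → ℤ, fcoef ψ (n - j) * fcoef w j)
    (hWτ : MemHsPer τ w) :
    MemHsPer (τ + 2) w :=
  elliptic_bootstrap_general d τ a hτ ha k w ψ hψa heq hWτ
end

section
/- Suppose the eigenvalues λ_n(k) of L(k) satisfy C_1 n^{2/d} ≤ λ_n(k) for all n and all k ∈ B, and that λ_{n_0}(k) is simple at k = k_0 with group velocity v_g = ∇λ_{n_0}(k_0). Define η_n(k,k_0) := λ_{n_0}(k_0) + (k−k_0)ᵀ v_g − λ_n(k) for n ≠ n_0. Then there exist ε_0 > 0, C > 0 such that for all ε ∈ (0, ε_0), all n ≠ n_0 and all k with |k − k_0| ≤ ε^{1/2}, one has 1/|η_n(k,k_0)| ≤ C n^{−2/d}. -/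
open MeasureTheory Complex Real RealInnerProductSpace

/-!
Write `η_n(k) = a(k) - λ_n(k)` with `a(k) = λ_{n₀}(k₀) + (k - k₀)ᵀ v_g`, which is continuous, so
`a < a(k₀) + 1` near `k₀`. Since `λ_n ≥ C₁ (n+1)^{2/d} → ∞`, for all `n` beyond some `N` one gets
`|η_n(k)| ≥ C₁ (n+1)^{2/d} / 2` near `k₀`. The finitely many remaining `n ≠ n₀` have
`η_n(k₀) = λ_{n₀}(k₀) - λ_n(k₀) ≠ 0` by simplicity, so by continuity `|η_n| ≥ |η_n(k₀)| / 2`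
on a common neighbourhood of `k₀`.
-/

open Filter Topology

lemma eventually_half_abs_lt_abs {X : Type*} [TopologicalSpace X] {f : X → ℝ} {x₀ : X}
    (hf : ContinuousAt f x₀) (h₀ : f x₀ ≠ 0) : ∀ᶠ x in 𝓝 x₀, |f x₀| / 2 < |f x| :=
  continuousAt_const.eventually_lt hf.abs (half_lt_self (abs_pos.2 h₀))

theorem exists_eventually_one_div_abs_sub_le {X : Type*} [TopologicalSpace X] {x₀ : X}
    {a : X → ℝ} {lam : ℕ → X → ℝ} {w : ℕ → ℝ} {c : ℝ} {K : Set X} {n₀ : ℕ}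
    (ha : ContinuousAt a x₀) (hlam : ∀ n, ContinuousAt (lam n) x₀) (hc : 0 < c)
    (hw : Tendsto w atTop atTop) (hw_pos : ∀ n, 0 < w n)
    (hlow : ∀ n, ∀ x ∈ K, c * w n ≤ lam n x) (hsep : ∀ n, n ≠ n₀ → lam n x₀ ≠ a x₀) :
    ∃ C > 0, ∀ᶠ x in 𝓝 x₀, ∀ n, n ≠ n₀ → x ∈ K → 1 / |a x - lam n x| ≤ C * (w n)⁻¹ := by
  obtain ⟨N, hN⟩ : ∃ N, ∀ n ≥ N, 2 * (a x₀ + 1) ≤ c * w n :=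
    ((hw.const_mul_atTop hc).eventually_ge_atTop _).exists_forall_of_atTop
  set S := (Finset.range N).erase n₀
  set C₀ := ∑ n ∈ S, 2 * w n / |a x₀ - lam n x₀|
  have hC₀ : 0 ≤ C₀ := Finset.sum_nonneg fun n _ => by have := hw_pos n; positivity
  refine ⟨2 / c + C₀, by positivity, ?_⟩
  have hnear : ∀ᶠ x in 𝓝 x₀, a x < a x₀ + 1 :=
    ha.eventually_lt continuousAt_const (lt_add_one _)
  have hfinite : ∀ᶠ x in 𝓝 x₀, ∀ n ∈ S, |a x₀ - lam n x₀| / 2 < |a x - lam n x| :=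
    (Finset.eventually_all S).2 fun n hn => eventually_half_abs_lt_abs (ha.sub (hlam n))
      (sub_ne_zero.2 (hsep n (Finset.ne_of_mem_erase hn)).symm)
  filter_upwards [hnear, hfinite] with x hx hxS n hn hxK
  have hwn := hw_pos n
  by_cases hnN : N ≤ n
  · have hgap : c * w n / 2 ≤ |a x - lam n x| := by
      rw [abs_sub_comm]
      exact (le_abs_self _).trans' (by linarith [hN n hnN, hlow n x hxK])
    calc 1 / |a x - lam n x| ≤ 1 / (c * w n / 2) := one_div_le_one_div_of_le (by positivity) hgap
      _ = 2 / c * (w n)⁻¹ := by field_simp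
      _ ≤ (2 / c + C₀) * (w n)⁻¹ := by gcongr; linarith
  · have hnS : n ∈ S := Finset.mem_erase.2 ⟨hn, Finset.mem_range.2 (not_le.1 hnN)⟩
    have hη₀ : 0 < |a x₀ - lam n x₀| := abs_pos.2 (sub_ne_zero.2 (hsep n hn).symm)
    have hterm : 2 * w n / |a x₀ - lam n x₀| ≤ C₀ :=
      Finset.single_le_sum (f := fun n => 2 * w n / |a x₀ - lam n x₀|)
        (fun m _ => by have := hw_pos m; positivity) hnS
    calc 1 / |a x - lam n x| ≤ 1 / (|a x₀ - lam n x₀| / 2) :=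
          one_div_le_one_div_of_le (by positivity) (hxS n hnS).le
      _ = 2 * w n / |a x₀ - lam n x₀| * (w n)⁻¹ := by field_simp
      _ ≤ (2 / c + C₀) * (w n)⁻¹ := by gcongr; linarith [div_pos two_pos hc]

theorem eta_bound_general (d : ℕ) (hd : 0 < d) (lam : ℕ → Rd d → ℝ)
    (C1 : ℝ) (hC1 : 0 < C1)
    (hlow : ∀ n : ℕ, ∀ k ∈ Bz d, C1 * ((n : ℝ) + 1) ^ ((2:ℝ)/d) ≤ lam n k)
    (hcont : ∀ n, Continuous (lam n))
    (n0 : ℕ) (k0 : Rd d) (vg : Rd d)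
    (hsimple : ∀ n, n ≠ n0 → lam n k0 ≠ lam n0 k0) :
    ∃ ε0 > 0, ∃ C > 0, ∀ ε ∈ Set.Ioo (0:ℝ) ε0, ∀ n : ℕ, n ≠ n0 →
      ∀ k ∈ Bz d, ‖k - k0‖ ≤ ε ^ ((1:ℝ)/2) →
        1 / |lam n0 k0 + (inner ℝ (k - k0) vg : ℝ) - lam n k| ≤
          C * ((n : ℝ) + 1) ^ (-(2:ℝ)/d) := by
  have hgrowth : Tendsto (fun n : ℕ => ((n : ℝ) + 1) ^ ((2:ℝ)/d)) atTop atTop :=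
    (tendsto_rpow_atTop (by positivity)).comp
      (tendsto_atTop_add_const_right _ 1 tendsto_natCast_atTop_atTop)
  obtain ⟨C, hC, hev⟩ := exists_eventually_one_div_abs_sub_le
    (x₀ := k0) (n₀ := n0) (a := fun k => lam n0 k0 + (inner ℝ (k - k0) vg : ℝ))
    (by fun_prop) (fun n => (hcont n).continuousAt) hC1 hgrowth (fun n => by positivity) hlow
    (by simpa using hsimple)
  obtain ⟨r, hr, hball⟩ := Metric.eventually_nhds_iff.1 hev
  refine ⟨r ^ 2, by positivity, C, hC, fun ε hε n hn k hk hkk => ?_⟩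
  have hkr : ‖k - k0‖ < r :=
    hkk.trans_lt (by rw [← Real.sqrt_eq_rpow, Real.sqrt_lt' hr]; exact hε.2)
  rw [neg_div, Real.rpow_neg (by positivity)]
  exact hball (by rwa [dist_eq_norm]) n hn hk

/-- uniform bound 1/|η_n(k,k₀)| ≤ C n^{-2/d} for n ≠ n₀ and k near k₀,
where η_n(k,k₀) = λ_{n₀}(k₀) + (k−k₀)ᵀv_g − λ_n(k). -/
theorem eta_bound (d : ℕ) (hd : 0 < d) (lam : ℕ → Rd d → ℝ)
    (C1 : ℝ) (hC1 : 0 < C1)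
    (hlow : ∀ n : ℕ, ∀ k ∈ Bz d, C1 * ((n : ℝ) + 1) ^ ((2:ℝ)/d) ≤ lam n k)
    (hmono : ∀ n : ℕ, ∀ k ∈ Bz d, lam n k ≤ lam (n + 1) k)
    (hcont : ∀ n, Continuous (lam n))
    (n0 : ℕ) (k0 : Rd d) (hk0 : k0 ∈ Bz d) (vg : Rd d)
    (hvg : HasGradientAt (lam n0) vg k0)
    (hsimple : ∀ n, n ≠ n0 → lam n k0 ≠ lam n0 k0) :
    ∃ ε0 > 0, ∃ C > 0, ∀ ε ∈ Set.Ioo (0:ℝ) ε0, ∀ n : ℕ, n ≠ n0 →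
      ∀ k ∈ Bz d, ‖k - k0‖ ≤ ε ^ ((1:ℝ)/2) →
        1 / |lam n0 k0 + (inner ℝ (k - k0) vg : ℝ) - lam n k| ≤
          C * ((n : ℝ) + 1) ^ (-(2:ℝ)/d) :=
  eta_bound_general d hd lam C1 hC1 hlow hcont n0 k0 vg hsimple
end

section
/- Let E: [0,T₀ε^{-2}] → X be continuous with ‖E(t)‖ ≤ c₀ε² + tC_res ε⁴ + c₁∫₀ᵗ (ε²‖E(τ)‖ + ε‖E(τ)‖² + ‖E(τ)‖³) dτ for all t in the interval, where c₀, c₁, C_res, T₀ > 0. Then there exist M > 0 and ε₀ > 0, namely M = (c₀ + T₀(C_res+1)) e^{c₁T₀} and ε₀ chosen so that c₁(ε₀M² + ε₀²M³) ≤ 1, such that for all ε ∈ (0,ε₀), ‖E(t)‖ ≤ M ε² for all t ∈ [0, T₀ ε^{-2}]. -/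
open MeasureTheory Real Set Filter Topology

/-! Under the bootstrap assumption `‖E‖ ≤ M ε²` on `[0, t]`, the quadratic and cubic terms of the
integrand are at most `ε⁴ (ε M² + ε² M³)`, so on the time scale `t ≤ T₀ ε⁻²` the integral inequality
becomes linear: `‖E‖ ≤ A + c₁ ε² ∫ ‖E‖` with `A = ε² (c₀ + T₀ (C_res + c₁ (ε M² + ε² M³)))`.
Grönwall's inequality gives `‖E t‖ ≤ A exp (c₁ T₀)`, which is strictly below `M ε²` as soon as
`c₁ (ε M² + ε² M³) < 1`; a continuity argument then removes the bootstrap assumption. -/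

section Bootstrap

variable {α β : Type*} [ConditionallyCompleteLinearOrder α] [TopologicalSpace α] [OrderTopology α]
  [DenselyOrdered α] [LinearOrder β] [TopologicalSpace β] [OrderClosedTopology β]

theorem ContinuousOn.forall_le_of_bootstrap {u : α → β} {a b : α} {C : β}
    (hu : ContinuousOn u (Icc a b)) (ha : u a ≤ C)
    (hstep : ∀ t ∈ Icc a b, (∀ τ ∈ Icc a t, u τ ≤ C) → u t < C) :
    ∀ t ∈ Icc a b, u t ≤ C := by
  have hclosed : IsClosed ({t | u t ≤ C} ∩ Icc a b) := by
    rw [inter_comm]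
    exact hu.preimage_isClosed_of_isClosed isClosed_Icc isClosed_Iic
  refine hclosed.Icc_subset_of_forall_mem_nhdsGT_of_Icc_subset ha fun t ht hle => ?_
  have hlt : ∀ᶠ τ in 𝓝[Icc a b] t, u τ < C :=
    (hu t (Ico_subset_Icc_self ht)).eventually_lt_const (hstep t (Ico_subset_Icc_self ht) hle)
  filter_upwards [nhdsWithin_le_of_mem (Icc_mem_nhdsGT_of_mem ht) hlt] with τ hτ using hτ.le

end Bootstrap

theorem add_mul_gronwallBound_zero (A K x : ℝ) :
    A + K * gronwallBound 0 K A x = A * exp (K * x) := by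
  rcases eq_or_ne K 0 with rfl | hK
  · simp
  · rw [gronwallBound_of_K_ne_0 hK]
    field_simp
    ring

theorem le_mul_exp_of_le_add_mul_integral {u : ℝ → ℝ} {a b A K : ℝ}
    (hu : ContinuousOn u (Icc a b)) (hK : 0 ≤ K)
    (h : ∀ t ∈ Icc a b, u t ≤ A + K * ∫ τ in a..t, u τ) :
    ∀ t ∈ Icc a b, u t ≤ A * exp (K * (t - a)) := by
  intro t ht
  have hF : ContinuousOn (fun s => ∫ τ in a..s, u τ) (Icc a b) := by
    rw [← uIcc_of_le (ht.1.trans ht.2)] at hu ⊢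
    exact intervalIntegral.continuousOn_primitive_interval (hu.integrableOn_compact isCompact_uIcc)
  have hF' : ∀ x ∈ Ico a b, HasDerivWithinAt (fun s => ∫ τ in a..s, u τ) (u x) (Ici x) x := by
    intro x hx
    have hnhds : Icc a b ∈ 𝓝[>] x := Icc_mem_nhdsGT_of_mem hx
    exact intervalIntegral.integral_hasDerivWithinAt_right (t := Ioi x)
      ((hu.mono (Icc_subset_Icc_right hx.2.le)).intervalIntegrable_of_Icc hx.1)
      ⟨Icc a b, hnhds, hu.aestronglyMeasurable measurableSet_Icc⟩
      ((hu x (Ico_subset_Icc_self hx)).mono_of_mem_nhdsWithin hnhds)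
  have hgron := le_gronwallBound_of_liminf_deriv_right_le (δ := 0) hF
    (fun x hx r hr => (hF' x hx).liminf_right_slope_le hr) (by simp)
    (fun x hx => (h x (Ico_subset_Icc_self hx)).trans_eq (add_comm _ _)) t ht
  calc u t ≤ A + K * ∫ τ in a..t, u τ := h t ht
    _ ≤ A + K * gronwallBound 0 K A (t - a) := by gcongr
    _ = A * exp (K * (t - a)) := add_mul_gronwallBound_zero A K (t - a)

section IntegralInequality

variable {u : ℝ → ℝ} {c0 c1 Cres T0 M ε t : ℝ}

theorem cubic_integrand_le {x : ℝ} (hε : 0 ≤ ε) (hx : 0 ≤ x) (hxM : x ≤ M * ε ^ 2) :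
    ε ^ 2 * x + ε * x ^ 2 + x ^ 3 ≤ ε ^ 2 * x + ε ^ 4 * (ε * M ^ 2 + ε ^ 2 * M ^ 3) := by
  have h2 : ε * x ^ 2 ≤ ε * (M * ε ^ 2) ^ 2 := by gcongr
  have h3 : x ^ 3 ≤ (M * ε ^ 2) ^ 3 := by gcongr
  linarith [show ε * (M * ε ^ 2) ^ 2 + (M * ε ^ 2) ^ 3 = ε ^ 4 * (ε * M ^ 2 + ε ^ 2 * M ^ 3) by
    ring]

theorem le_add_mul_integral_of_le (hc1 : 0 ≤ c1) (hCres : 0 ≤ Cres) (hM : 0 ≤ M) (hε : 0 ≤ ε)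
    (htT : t * ε ^ 2 ≤ T0) (hu : ContinuousOn u (Icc 0 t)) (hu0 : ∀ s ∈ Icc 0 t, 0 ≤ u s)
    (hineq : ∀ s ∈ Icc 0 t, u s ≤ c0 * ε ^ 2 + s * Cres * ε ^ 4 +
      c1 * ∫ τ in (0:ℝ)..s, (ε ^ 2 * u τ + ε * u τ ^ 2 + u τ ^ 3))
    (hbound : ∀ s ∈ Icc 0 t, u s ≤ M * ε ^ 2) :
    ∀ s ∈ Icc 0 t, u s ≤ ε ^ 2 * (c0 + T0 * (Cres + c1 * (ε * M ^ 2 + ε ^ 2 * M ^ 3))) +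
      c1 * ε ^ 2 * ∫ τ in (0:ℝ)..s, u τ := by
  intro s hs
  set ρ := ε * M ^ 2 + ε ^ 2 * M ^ 3
  have hus : ContinuousOn u (Icc 0 s) := hu.mono (Icc_subset_Icc_right hs.2)
  have hint : ∫ τ in (0:ℝ)..s, (ε ^ 2 * u τ + ε * u τ ^ 2 + u τ ^ 3) ≤
      ∫ τ in (0:ℝ)..s, (ε ^ 2 * u τ + ε ^ 4 * ρ) :=
    intervalIntegral.integral_mono_on hs.1 (ContinuousOn.intervalIntegrable_of_Icc hs.1 (by fun_prop))
      (ContinuousOn.intervalIntegrable_of_Icc hs.1 (by fun_prop)) fun τ hτ => cubic_integrand_le hε (hu0 τ ⟨hτ.1, hτ.2.trans hs.2⟩)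
        (hbound τ ⟨hτ.1, hτ.2.trans hs.2⟩)
  rw [intervalIntegral.integral_add ((hus.intervalIntegrable_of_Icc hs.1).const_mul _)
    intervalIntegrable_const, intervalIntegral.integral_const_mul, intervalIntegral.integral_const,
    smul_eq_mul, sub_zero] at hint
  have hsT : s * ε ^ 2 ≤ T0 := (mul_le_mul_of_nonneg_right hs.2 (sq_nonneg ε)).trans htT
  calc u s ≤ c0 * ε ^ 2 + s * Cres * ε ^ 4 +
        c1 * (ε ^ 2 * (∫ τ in (0:ℝ)..s, u τ) + s * (ε ^ 4 * ρ)) := (hineq s hs).trans (by gcongr)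
    _ = ε ^ 2 * (c0 + s * ε ^ 2 * (Cres + c1 * ρ)) + c1 * ε ^ 2 * ∫ τ in (0:ℝ)..s, u τ := by ring
    _ ≤ ε ^ 2 * (c0 + T0 * (Cres + c1 * ρ)) + c1 * ε ^ 2 * ∫ τ in (0:ℝ)..s, u τ := by gcongr

theorem le_mul_exp_of_integral_inequality (hc0 : 0 ≤ c0) (hc1 : 0 ≤ c1) (hCres : 0 ≤ Cres)
    (hM : 0 ≤ M) (hε : 0 ≤ ε) (ht : 0 ≤ t) (htT : t * ε ^ 2 ≤ T0)
    (hu : ContinuousOn u (Icc 0 t)) (hu0 : ∀ s ∈ Icc 0 t, 0 ≤ u s)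
    (hineq : ∀ s ∈ Icc 0 t, u s ≤ c0 * ε ^ 2 + s * Cres * ε ^ 4 +
      c1 * ∫ τ in (0:ℝ)..s, (ε ^ 2 * u τ + ε * u τ ^ 2 + u τ ^ 3))
    (hbound : ∀ s ∈ Icc 0 t, u s ≤ M * ε ^ 2) :
    u t ≤ ε ^ 2 * (c0 + T0 * (Cres + c1 * (ε * M ^ 2 + ε ^ 2 * M ^ 3))) * exp (c1 * T0) := by
  have hT0 : 0 ≤ T0 := (by positivity : 0 ≤ t * ε ^ 2).trans htT
  have hexp : c1 * ε ^ 2 * (t - 0) ≤ c1 * T0 := by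
    rw [sub_zero, mul_assoc, mul_comm (ε ^ 2)]
    gcongr
  calc u t ≤ ε ^ 2 * (c0 + T0 * (Cres + c1 * (ε * M ^ 2 + ε ^ 2 * M ^ 3))) *
        exp (c1 * ε ^ 2 * (t - 0)) :=
      le_mul_exp_of_le_add_mul_integral hu (by positivity)
        (le_add_mul_integral_of_le hc1 hCres hM hε htT hu hu0 hineq hbound) t ⟨ht, le_rfl⟩
    _ ≤ ε ^ 2 * (c0 + T0 * (Cres + c1 * (ε * M ^ 2 + ε ^ 2 * M ^ 3))) * exp (c1 * T0) := by
      gcongr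

end IntegralInequality

theorem mul_add_sq_mul_le_one {c1 M : ℝ} (hc1 : 0 < c1) (hM : 0 < M) :
    c1 * (min 1 (c1 * (M ^ 2 + M ^ 3))⁻¹ * M ^ 2 + min 1 (c1 * (M ^ 2 + M ^ 3))⁻¹ ^ 2 * M ^ 3)
      ≤ 1 := by
  set ε0 := min 1 (c1 * (M ^ 2 + M ^ 3))⁻¹
  have hε0 : 0 ≤ ε0 := by positivity
  have hsq : ε0 ^ 2 ≤ ε0 := pow_le_of_le_one hε0 (min_le_left _ _) two_ne_zero
  calc c1 * (ε0 * M ^ 2 + ε0 ^ 2 * M ^ 3) ≤ ε0 * (c1 * (M ^ 2 + M ^ 3)) := by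
        nlinarith [mul_le_mul_of_nonneg_right hsq (by positivity : 0 ≤ c1 * M ^ 3)]
    _ ≤ (c1 * (M ^ 2 + M ^ 3))⁻¹ * (c1 * (M ^ 2 + M ^ 3)) := by gcongr; exact min_le_right _ _
    _ = 1 := inv_mul_cancel₀ (by positivity)

/-- Gronwall-type bootstrap estimate for the error E. -/
theorem gronwall_bootstrap (X : Type*) [NormedAddCommGroup X]
    (c0 c1 Cres T0 : ℝ) (hc0 : 0 < c0) (hc1 : 0 < c1) (hCres : 0 < Cres) (hT0 : 0 < T0) :
    ∃ M > 0, ∃ ε0 > 0,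
      M = (c0 + T0 * (Cres + 1)) * Real.exp (c1 * T0) ∧
      c1 * (ε0 * M ^ 2 + ε0 ^ 2 * M ^ 3) ≤ 1 ∧
      ∀ ε ∈ Set.Ioo (0:ℝ) ε0, ∀ E : ℝ → X,
        ContinuousOn E (Set.Icc 0 (T0 * ε⁻¹ ^ 2)) →
        (∀ t ∈ Set.Icc (0:ℝ) (T0 * ε⁻¹ ^ 2),
          ‖E t‖ ≤ c0 * ε ^ 2 + t * Cres * ε ^ 4 +
            c1 * ∫ τ in (0:ℝ)..t, (ε ^ 2 * ‖E τ‖ + ε * ‖E τ‖ ^ 2 + ‖E τ‖ ^ 3)) →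
        ∀ t ∈ Set.Icc (0:ℝ) (T0 * ε⁻¹ ^ 2), ‖E t‖ ≤ M * ε ^ 2 := by
  set M := (c0 + T0 * (Cres + 1)) * exp (c1 * T0)
  have hM : 0 < M := by positivity
  have hsmall := mul_add_sq_mul_le_one hc1 hM
  refine ⟨M, hM, _, by positivity, rfl, hsmall, ?_⟩
  rintro ε ⟨hε, hεε0⟩ E hE hineq
  have hδ : c1 * (ε * M ^ 2 + ε ^ 2 * M ^ 3) < 1 := by
    refine lt_of_lt_of_le ?_ hsmall
    gcongr
  have hc0M : c0 ≤ M :=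
    (le_add_of_nonneg_right (by positivity)).trans
      (le_mul_of_one_le_right (by positivity) (one_le_exp (by positivity)))
  refine hE.norm.forall_le_of_bootstrap ?_ fun t ht hbound => ?_
  · have h0 := hineq 0 ⟨le_rfl, by positivity⟩
    simp only [intervalIntegral.integral_same, mul_zero, zero_mul, add_zero] at h0
    exact h0.trans (by gcongr)
  · have htT : t * ε ^ 2 ≤ T0 :=
      (le_div_iff₀ (by positivity)).1 (by simpa [div_eq_mul_inv] using ht.2)
    calc ‖E t‖ ≤ ε ^ 2 * (c0 + T0 * (Cres + c1 * (ε * M ^ 2 + ε ^ 2 * M ^ 3))) * exp (c1 * T0) :=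
          le_mul_exp_of_integral_inequality (u := fun τ => ‖E τ‖) hc0.le hc1.le hCres.le hM.le
            hε.le ht.1 htT (hE.norm.mono (Icc_subset_Icc_right ht.2)) (fun _ _ => norm_nonneg _)
            (fun s hs => hineq s ⟨hs.1, hs.2.trans ht.2⟩) hbound
      _ < ε ^ 2 * (c0 + T0 * (Cres + 1)) * exp (c1 * T0) := by gcongr
      _ = M * ε ^ 2 := by ring
end
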